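/- For every q ∈ (0,1), every L ≥ 1, and every k ∈ {0,1,…,L+1}, the intersection of the kernel of H_L with the magnetization sector 𝓗_k (the eigenspace of S³_tot with eigenvalue (L+1)/2 − k) is exactly one-dimensional, spanned by the vector ψ_k = Σ_{D ⊆ {0,…,L}, |D| = k} q^{Σ_{x∈D} x} |D⟩. Consequently the kernel of H_L has dimension L+2. -/

import Mathlib

open Matrix Kronecker ComplexOrder

noncomputable section

/-- Spin-1/2 matrix `S¹ = (1/2)[[0,1],[1,0]]`. -/
def S1 : Matrix (Fin 2) (Fin 2) ℂ := !![0, 1/2; 1/2, 0]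

/-- Spin-1/2 matrix `S² = (1/2)[[0,−i],[i,0]]`. -/
def S2 : Matrix (Fin 2) (Fin 2) ℂ := !![0, -Complex.I/2; Complex.I/2, 0]

/-- Spin-1/2 matrix `S³ = (1/2)[[1,0],[0,−1]]`. -/
def S3 : Matrix (Fin 2) (Fin 2) ℂ := !![1/2, 0; 0, -1/2]

/-- The anisotropy `Δ = (q + q⁻¹)/2`. -/
def Delta (q : ℝ) : ℝ := (q + q⁻¹) / 2

/-- The boundary field `B = (1 − q²)/(2(1 + q²)) = (1/2)√(1 − 1/Δ²)`. -/
def Bfield (q : ℝ) : ℝ := (1 - q ^ 2) / (2 * (1 + q ^ 2))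

/-- The two-site kink Hamiltonian
`h(Δ) = (1/4)·𝟙⊗𝟙 − S³⊗S³ − Δ⁻¹(S¹⊗S¹ + S²⊗S²) + B(S³⊗𝟙 − 𝟙⊗S³)` on `ℂ²⊗ℂ²`. -/
def hKink (q : ℝ) : Matrix (Fin 2 × Fin 2) (Fin 2 × Fin 2) ℂ :=
  (1 / 4 : ℂ) • (1 : Matrix (Fin 2 × Fin 2) (Fin 2 × Fin 2) ℂ)
    - S3 ⊗ₖ S3 - ((Delta q : ℂ))⁻¹ • (S1 ⊗ₖ S1 + S2 ⊗ₖ S2)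
    + (Bfield q : ℂ) • (S3 ⊗ₖ (1 : Matrix (Fin 2) (Fin 2) ℂ)
        - (1 : Matrix (Fin 2) (Fin 2) ℂ) ⊗ₖ S3)

/-- The operator acting as the two-site matrix `M` on the tensor factors of the sites
`a` and `b` (in this order) and as the identity on all other factors. -/
def twoSiteOp {ι : Type*} [Fintype ι] [DecidableEq ι]
    (M : Matrix (Fin 2 × Fin 2) (Fin 2 × Fin 2) ℂ) (a b : ι) :
    Matrix (ι → Fin 2) (ι → Fin 2) ℂ :=
  fun σ τ => M (σ a, σ b) (τ a, τ b) *
    (if ∀ y, y ≠ a → y ≠ b → σ y = τ y then 1 else 0)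

/-- The operator acting as the one-site matrix `A` on the tensor factor of the site `a`
and as the identity on all other factors. -/
def siteOp {ι : Type*} [Fintype ι] [DecidableEq ι]
    (A : Matrix (Fin 2) (Fin 2) ℂ) (a : ι) : Matrix (ι → Fin 2) (ι → Fin 2) ℂ :=
  fun σ τ => A (σ a) (τ a) * (if ∀ y, y ≠ a → σ y = τ y then 1 else 0)

/-- The finite XXZ kink chain Hamiltonian `H_L = Σ_{x=0}^{L−1} h(Δ)_{x,x+1}`
on `(ℂ²)^{⊗(L+1)}` (sites `0,…,L`). -/
def HChain (L : ℕ) (q : ℝ) : Matrix (Fin (L + 1) → Fin 2) (Fin (L + 1) → Fin 2) ℂ :=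
  ∑ x : Fin L, twoSiteOp (hKink q) x.castSucc x.succ

/-- The kink product vector `φ(z) = ⊗_{x=0}^{L}(|↑⟩ + z q^x |↓⟩)`. -/
def phi (L : ℕ) (q : ℝ) (z : ℂ) : (Fin (L + 1) → Fin 2) → ℂ :=
  fun σ => ∏ x : Fin (L + 1), (![1, z * (q : ℂ) ^ (x : ℕ)] : Fin 2 → ℂ) (σ x)

/-- The total third component of the spin, `S³_tot = Σ_{x=0}^{L} S³_x`. -/
def S3tot (L : ℕ) : Matrix (Fin (L + 1) → Fin 2) (Fin (L + 1) → Fin 2) ℂ :=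
  ∑ x : Fin (L + 1), siteOp S3 x

/-- The sector ground state vector `ψ_k = Σ_{D ⊆ {0,…,L}, |D| = k} q^{Σ_{x∈D} x} |D⟩`,
where `|D⟩` has `|↓⟩` at the sites of `D` and `|↑⟩` elsewhere; in components,
`ψ_k(σ) = q^{Σ_{σ x = ↓} x}` if `σ` has exactly `k` down spins and `0` otherwise. -/
def psiSector (L : ℕ) (q : ℝ) (k : ℕ) : (Fin (L + 1) → Fin 2) → ℂ :=
  fun σ =>
    if (Finset.univ.filter fun x => σ x = 1).card = k then
      (q : ℂ) ^ (∑ x ∈ Finset.univ.filter (fun x => σ x = 1), (x : ℕ))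
    else 0

/-!
With `e = |↑↓⟩ − q |↓↑⟩` the bond Hamiltonian is `h(Δ) = (1 + q²)⁻¹ |e⟩⟨e|`, so `H_L` is a sum of
positive operators and `H_L v = 0` iff `⟨e|_{x,x+1} v = 0` on every bond, i.e.
`v(…↑↓…) = q v(…↓↑…)` at every pair of neighbouring sites. `S³_tot` is diagonal, so the sector
`𝓗_k` consists of the vectors supported on configurations with `k` down spins, and `ψ_k` satisfies
the bond relations. Since `q ≠ 0`, the zero set of a solution `u` is stable under adjacent
transpositions of the sites; these generate the symmetric group, which acts transitively on the
configurations with `k` down spins. So a solution in `𝓗_k` vanishing at one configuration is `0`;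
applied to `v − c ψ_k` this gives uniqueness. The bond relations respect the sector decomposition,
so the kernel is spanned by `ψ_0, …, ψ_{L+1}`, which have disjoint nonempty supports.
-/

open Function Equiv

theorem Matrix.sum_conjTranspose_mul_self_mulVec_eq_zero_iff {κ m n R : Type*} [Fintype m]
    [Fintype n] [PartialOrder R] [CommRing R] [StarRing R] [StarOrderedRing R] [NoZeroDivisors R]
    (s : Finset κ) (B : κ → Matrix m n R) (v : n → R) :
    (∑ i ∈ s, (B i)ᴴ * B i) *ᵥ v = 0 ↔ ∀ i ∈ s, B i *ᵥ v = 0 := by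
  have hsum : star v ⬝ᵥ ((∑ i ∈ s, (B i)ᴴ * B i) *ᵥ v)
      = ∑ i ∈ s, star (B i *ᵥ v) ⬝ᵥ (B i *ᵥ v) := by
    simp only [sum_mulVec, dotProduct_sum, ← mulVec_mulVec, dotProduct_mulVec, star_mulVec]
  constructor
  · intro h i hi
    rw [h, dotProduct_zero, eq_comm,
      Finset.sum_eq_zero_iff_of_nonneg fun i _ => dotProduct_star_self_nonneg _] at hsum
    exact dotProduct_star_self_eq_zero.1 (hsum i hi)
  · intro h
    rw [sum_mulVec]
    exact Finset.sum_eq_zero fun i hi => by rw [← mulVec_mulVec, h i hi, mulVec_zero]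

theorem Fin.castSucc_ne_succ {n : ℕ} (i : Fin n) : i.castSucc ≠ i.succ :=
  Fin.castSucc_lt_succ.ne

theorem Fin.comp_perm_of_comp_swap_castSucc_succ {n : ℕ} {β : Type*}
    {P : (Fin (n + 1) → β) → Prop} (h : ∀ σ (i : Fin n), P σ → P (σ ∘ swap i.castSucc i.succ))
    (π : Perm (Fin (n + 1))) {σ : Fin (n + 1) → β} (hσ : P σ) : P (σ ∘ π) := by
  have hπ : π ∈ Submonoid.closure (Set.range fun i : Fin n => swap i.castSucc i.succ) := by
    rw [Perm.mclosure_swap_castSucc_succ]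
    trivial
  induction hπ using Submonoid.closure_induction generalizing σ with
  | mem _ hs =>
    obtain ⟨i, rfl⟩ := hs
    exact h σ i hσ
  | one => exact hσ
  | mul π₁ π₂ _ _ ih₁ ih₂ => exact ih₂ (ih₁ hσ)

theorem exists_perm_eq_comp_of_card_fiber_eq {ι β : Type*} [Fintype ι] [DecidableEq β]
    {σ τ : ι → β} (h : ∀ c, Fintype.card {x // σ x = c} = Fintype.card {x // τ x = c}) :
    ∃ π : Perm ι, σ = τ ∘ π :=
  ⟨ofFiberEquiv fun c => Fintype.equivOfCardEq (h c),
    funext fun x => (ofFiberEquiv_map _ x).symm⟩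

section LocalOperators

variable {ι : Type*} [Fintype ι] [DecidableEq ι]

theorem sum_ite_agree_off_pair {R : Type*} [NonAssocSemiring R] {a b : ι} (hab : a ≠ b)
    (σ : ι → Fin 2) (g : (ι → Fin 2) → R) :
    ∑ τ, (if ∀ y, y ≠ a → y ≠ b → σ y = τ y then (1 : R) else 0) * g τ
      = ∑ p : Fin 2 × Fin 2, g (update (update σ a p.1) b p.2) := by
  have hinv : ∀ τ : ι → Fin 2, (∀ y, y ≠ a → y ≠ b → σ y = τ y) →
      update (update σ a (τ a)) b (τ b) = τ := fun τ hτ => by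
    ext y
    by_cases hyb : y = b
    · simp [hyb]
    by_cases hya : y = a
    · simp [hya, hab]
    simp [hya, hyb, hτ y hya hyb]
  simp only [ite_mul, one_mul, zero_mul, ← Finset.sum_filter]
  refine Finset.sum_nbij' (fun τ => (τ a, τ b)) (fun p => update (update σ a p.1) b p.2)
    ?_ ?_ ?_ ?_ ?_
  all_goals intro x hx
  all_goals simp_all

theorem sum_ite_agree_off_site {R : Type*} [NonAssocSemiring R] (a : ι) (σ : ι → Fin 2)
    (g : (ι → Fin 2) → R) :
    ∑ τ, (if ∀ y, y ≠ a → σ y = τ y then (1 : R) else 0) * g τ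
      = ∑ i : Fin 2, g (update σ a i) := by
  have hinv : ∀ τ : ι → Fin 2, (∀ y, y ≠ a → σ y = τ y) → update σ a (τ a) = τ :=
    fun τ hτ => by
      ext y
      by_cases hya : y = a
      · simp [hya]
      simp [hya, hτ y hya]
  simp only [ite_mul, one_mul, zero_mul, ← Finset.sum_filter]
  refine Finset.sum_nbij' (fun τ => τ a) (fun i => update σ a i) ?_ ?_ ?_ ?_ ?_
  all_goals intro x hx
  all_goals simp_all

theorem siteOp_mulVec (A : Matrix (Fin 2) (Fin 2) ℂ) (a : ι) (v : (ι → Fin 2) → ℂ)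
    (σ : ι → Fin 2) : (siteOp A a *ᵥ v) σ = ∑ i, A (σ a) i * v (update σ a i) := by
  simp only [mulVec, dotProduct, siteOp, mul_comm _ (ite _ _ _), mul_assoc]
  rw [sum_ite_agree_off_site]
  simp

theorem siteOp_diagonal_mulVec (d : Fin 2 → ℂ) (a : ι) (v : (ι → Fin 2) → ℂ)
    (σ : ι → Fin 2) : (siteOp (diagonal d) a *ᵥ v) σ = d (σ a) * v σ := by
  rw [siteOp_mulVec, Finset.sum_eq_single (σ a)
    (fun i _ hi => by rw [diagonal_apply_ne _ hi.symm, zero_mul]) (by simp)]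
  simp

variable {a b : ι}

theorem twoSiteOp_mulVec (M : Matrix (Fin 2 × Fin 2) (Fin 2 × Fin 2) ℂ) (hab : a ≠ b)
    (v : (ι → Fin 2) → ℂ) (σ : ι → Fin 2) :
    (twoSiteOp M a b *ᵥ v) σ = ∑ p, M (σ a, σ b) p * v (update (update σ a p.1) b p.2) := by
  simp only [mulVec, dotProduct, twoSiteOp, mul_comm _ (ite _ _ _), mul_assoc]
  rw [sum_ite_agree_off_pair hab]
  simp [hab]

theorem twoSiteOp_conjTranspose (M : Matrix (Fin 2 × Fin 2) (Fin 2 × Fin 2) ℂ) (a b : ι) :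
    (twoSiteOp M a b)ᴴ = twoSiteOp Mᴴ a b := by
  ext σ τ
  simp only [conjTranspose_apply, twoSiteOp, star_mul', apply_ite star, star_one, star_zero]
  congr 2
  exact propext ⟨fun h y hya hyb => (h y hya hyb).symm, fun h y hya hyb => (h y hya hyb).symm⟩

theorem twoSiteOp_mul (M N : Matrix (Fin 2 × Fin 2) (Fin 2 × Fin 2) ℂ) (hab : a ≠ b) :
    twoSiteOp M a b * twoSiteOp N a b = twoSiteOp (M * N) a b := by
  refine ext_iff_mulVec.2 fun v => funext fun σ => ?_
  simp only [← mulVec_mulVec, twoSiteOp_mulVec _ hab, update_idem, update_comm hab.symm,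
    update_of_ne hab, update_self, mul_apply, Finset.mul_sum, Finset.sum_mul, mul_assoc]
  exact Finset.sum_comm

theorem twoSiteOp_smul (c : ℂ) (M : Matrix (Fin 2 × Fin 2) (Fin 2 × Fin 2) ℂ) (a b : ι) :
    twoSiteOp (c • M) a b = c • twoSiteOp M a b := by
  ext σ τ
  simp [twoSiteOp]

end LocalOperators

/-- The kink vector `e`, with `0 = ↑` and `1 = ↓`. -/
def kinkVec (q : ℝ) : Fin 2 × Fin 2 → ℂ := fun p => !![0, 1; -(q : ℂ), 0] p.1 p.2

theorem Delta_inv (q : ℝ) (hq : q ≠ 0) : ((Delta q : ℂ))⁻¹ = 2 * q / (1 + (q : ℂ) ^ 2) := by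
  have h : Delta q = (1 + q ^ 2) / (2 * q) := by
    rw [Delta]
    field_simp
    ring
  rw [h]
  push_cast
  rw [inv_div]

theorem one_add_ofReal_sq_ne_zero (q : ℝ) : 1 + (q : ℂ) ^ 2 ≠ 0 := by
  exact_mod_cast (by positivity : 1 + q ^ 2 ≠ 0)

theorem hKink_apply (q : ℝ) (hq : q ≠ 0) (i j : Fin 2 × Fin 2) :
    hKink q i j = (1 + (q : ℂ) ^ 2)⁻¹ * kinkVec q i * kinkVec q j := by
  have := one_add_ofReal_sq_ne_zero q
  obtain ⟨i₁, i₂⟩ := i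
  obtain ⟨j₁, j₂⟩ := j
  fin_cases i₁ <;> fin_cases i₂ <;> fin_cases j₁ <;> fin_cases j₂ <;>
    simp [hKink, kinkVec, Bfield, S1, S2, S3, Delta_inv q hq] <;>
    field_simp <;> ring_nf <;> simp [Complex.I_sq] <;> ring

def kinkRow (q : ℝ) : Matrix (Fin 2 × Fin 2) (Fin 2 × Fin 2) ℂ :=
  Matrix.of fun i j => if i = (0, 0) then kinkVec q j else 0

theorem hKink_eq_smul_conjTranspose_mul_self (q : ℝ) (hq : q ≠ 0) :
    hKink q = (1 + (q : ℂ) ^ 2)⁻¹ • ((kinkRow q)ᴴ * kinkRow q) := by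
  ext i j
  have hreal : starRingEnd ℂ (kinkVec q i) = kinkVec q i := by
    obtain ⟨i₁, i₂⟩ := i
    fin_cases i₁ <;> fin_cases i₂ <;> simp [kinkVec]
  simp [hKink_apply q hq, kinkRow, mul_apply, hreal, mul_assoc]

/-- The ground-state condition `⟨e|_{ab} v = 0` of the bond `(a, b)`. -/
def KinkRelation {ι : Type*} [DecidableEq ι] (q : ℝ) (a b : ι) (v : (ι → Fin 2) → ℂ) : Prop :=
  ∀ σ, v (update (update σ a 0) b 1) = q * v (update (update σ a 1) b 0)

theorem twoSiteOp_kinkRow_mulVec_eq_zero_iff {ι : Type*} [Fintype ι] [DecidableEq ι] (q : ℝ)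
    {a b : ι} (hab : a ≠ b) (v : (ι → Fin 2) → ℂ) :
    twoSiteOp (kinkRow q) a b *ᵥ v = 0 ↔ KinkRelation q a b v := by
  have hrow : ∀ σ : ι → Fin 2, (twoSiteOp (kinkRow q) a b *ᵥ v) σ
      = if (σ a, σ b) = (0, 0) then
          v (update (update σ a 0) b 1) - q * v (update (update σ a 1) b 0) else 0 := by
    intro σ
    rw [twoSiteOp_mulVec _ hab]
    split_ifs <;>
      simp [kinkRow, kinkVec, *, Fintype.sum_prod_type, Fin.sum_univ_two, sub_eq_add_neg]
  constructor
  · intro h σ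
    have := congrFun h (update (update σ a 0) b 0)
    rw [hrow] at this
    simpa [update_of_ne hab, update_idem, update_comm hab.symm, sub_eq_zero] using this
  · intro h
    ext σ
    rw [hrow]
    split_ifs <;> simp [h σ]

theorem HChain_mulVec_eq_zero_iff {L : ℕ} {q : ℝ} (hq : q ≠ 0) (v : (Fin (L + 1) → Fin 2) → ℂ) :
    HChain L q *ᵥ v = 0 ↔ ∀ x : Fin L, KinkRelation q x.castSucc x.succ v := by
  have hH : HChain L q = (1 + (q : ℂ) ^ 2)⁻¹ • ∑ x : Fin L,
      (twoSiteOp (kinkRow q) x.castSucc x.succ)ᴴ * twoSiteOp (kinkRow q) x.castSucc x.succ := by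
    simp only [HChain, Finset.smul_sum, twoSiteOp_conjTranspose,
      twoSiteOp_mul _ _ (Fin.castSucc_ne_succ _), ← twoSiteOp_smul,
      ← hKink_eq_smul_conjTranspose_mul_self q hq]
  rw [hH, smul_mulVec, smul_eq_zero_iff_right (inv_ne_zero (one_add_ofReal_sq_ne_zero q)),
    sum_conjTranspose_mul_self_mulVec_eq_zero_iff]
  simp [twoSiteOp_kinkRow_mulVec_eq_zero_iff q (Fin.castSucc_ne_succ _)]

section Magnetization

variable {ι : Type*} [Fintype ι]

def downSet (σ : ι → Fin 2) : Finset ι := Finset.univ.filter fun x => σ x = 1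

theorem psiSector_apply (L : ℕ) (q : ℝ) (k : ℕ) (σ : Fin (L + 1) → Fin 2) :
    psiSector L q k σ
      = if (downSet σ).card = k then (q : ℂ) ^ ∑ x ∈ downSet σ, (x : ℕ) else 0 := rfl

theorem S3_eq_diagonal : S3 = diagonal fun i => 1 / 2 - if i = 1 then 1 else 0 := by
  ext i j
  fin_cases i <;> fin_cases j <;> norm_num [S3]

theorem S3tot_mulVec {L : ℕ} (v : (Fin (L + 1) → Fin 2) → ℂ) (σ : Fin (L + 1) → Fin 2) :
    (S3tot L *ᵥ v) σ = (((L : ℂ) + 1) / 2 - (downSet σ).card) * v σ := by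
  simp only [S3tot, sum_mulVec, Finset.sum_apply, S3_eq_diagonal, siteOp_diagonal_mulVec,
    ← Finset.sum_mul, Finset.sum_sub_distrib, Finset.sum_boole, downSet, Finset.sum_const,
    Finset.card_univ, Fintype.card_fin, nsmul_eq_mul, Nat.cast_add, Nat.cast_one]
  ring

theorem S3tot_mulVec_eq_smul_iff {L : ℕ} (k : ℕ) (v : (Fin (L + 1) → Fin 2) → ℂ) :
    S3tot L *ᵥ v = (((L : ℂ) + 1) / 2 - k) • v ↔ ∀ σ, (downSet σ).card ≠ k → v σ = 0 := by
  simp only [funext_iff, S3tot_mulVec, Pi.smul_apply, smul_eq_mul]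
  refine forall_congr' fun σ => ?_
  rw [← sub_eq_zero, ← sub_mul, mul_eq_zero, sub_sub_sub_cancel_left, sub_eq_zero, Nat.cast_inj,
    eq_comm (a := k)]
  tauto

theorem card_fiber_eq_of_card_downSet_eq {σ τ : ι → Fin 2}
    (h : (downSet σ).card = (downSet τ).card) (c : Fin 2) :
    Fintype.card {x // σ x = c} = Fintype.card {x // τ x = c} := by
  have hzero : ∀ ρ : ι → Fin 2, Fintype.card {x // ρ x = 0}
      = Fintype.card ι - (downSet ρ).card := fun ρ => by
    rw [downSet, ← Fintype.card_subtype, ← Fintype.card_subtype_compl]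
    exact Fintype.card_congr (subtypeEquivRight fun x => by omega)
  obtain rfl | rfl : c = 0 ∨ c = 1 := by omega
  · rw [hzero, hzero, h]
  · simpa only [downSet, Fintype.card_subtype] using h

theorem exists_card_downSet_eq [DecidableEq ι] {k : ℕ} (hk : k ≤ Fintype.card ι) :
    ∃ σ : ι → Fin 2, (downSet σ).card = k := by
  obtain ⟨s, -, hs⟩ := Finset.exists_subset_card_eq (s := Finset.univ) hk
  refine ⟨fun x => if x ∈ s then 1 else 0, ?_⟩
  convert hs
  ext x
  by_cases hx : x ∈ s <;> simp [downSet, hx]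

variable [DecidableEq ι] {a b : ι}

theorem downSet_update_update_zero_one (hab : a ≠ b) (σ : ι → Fin 2) :
    downSet (update (update σ a 0) b 1) = insert b (downSet σ \ {a, b}) := by
  ext y
  by_cases hyb : y = b <;> by_cases hya : y = a <;> simp_all [downSet]

theorem downSet_update_update_one_zero (hab : a ≠ b) (σ : ι → Fin 2) :
    downSet (update (update σ a 1) b 0) = insert a (downSet σ \ {a, b}) := by
  ext y
  by_cases hyb : y = b <;> by_cases hya : y = a <;> simp_all [downSet]

theorem card_downSet_update_update_zero_one (hab : a ≠ b) (σ : ι → Fin 2) :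
    (downSet (update (update σ a 0) b 1)).card = (downSet (update (update σ a 1) b 0)).card := by
  rw [downSet_update_update_zero_one hab, downSet_update_update_one_zero hab,
    Finset.card_insert_of_notMem (by simp), Finset.card_insert_of_notMem (by simp)]

end Magnetization

theorem psiSector_kinkRelation (L : ℕ) (q : ℝ) (k : ℕ) (x : Fin L) :
    KinkRelation q x.castSucc x.succ (psiSector L q k) := by
  intro σ
  have hab := Fin.castSucc_ne_succ x
  have ha : x.castSucc ∉ downSet σ \ {x.castSucc, x.succ} := by simp
  have hb : x.succ ∉ downSet σ \ {x.castSucc, x.succ} := by simp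
  rw [psiSector_apply, psiSector_apply, downSet_update_update_zero_one hab,
    downSet_update_update_one_zero hab, Finset.card_insert_of_notMem ha,
    Finset.card_insert_of_notMem hb, Finset.sum_insert ha, Finset.sum_insert hb]
  split_ifs
  · simp only [Fin.val_succ, Fin.val_castSucc, pow_add, pow_one]
    ring
  · rw [mul_zero]

theorem HChain_mulVec_psiSector {L : ℕ} {q : ℝ} (hq : q ≠ 0) (k : ℕ) :
    HChain L q *ᵥ psiSector L q k = 0 :=
  (HChain_mulVec_eq_zero_iff hq _).2 (psiSector_kinkRelation L q k)

theorem KinkRelation.apply_comp_swap_eq_zero {ι : Type*} [DecidableEq ι] {q : ℝ} (hq : q ≠ 0)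
    {a b : ι} (hab : a ≠ b) {u : (ι → Fin 2) → ℂ} (hu : KinkRelation q a b u)
    {σ : ι → Fin 2} (hσ : u σ = 0) : u (σ ∘ swap a b) = 0 := by
  have key : ∀ i j : Fin 2, u (update (update σ a i) b j) = 0 →
      u (update (update σ a j) b i) = 0 := by
    have hq' : (q : ℂ) ≠ 0 := by exact_mod_cast hq
    intro i j h
    fin_cases i <;> fin_cases j <;> simp_all [hu σ]
  rw [comp_swap_eq_update, update_comm hab.symm]
  exact key _ _ (by simpa using hσ)

theorem eq_zero_of_kinkRelation {L : ℕ} {q : ℝ} (hq : q ≠ 0) {k : ℕ}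
    {u : (Fin (L + 1) → Fin 2) → ℂ} (hu : ∀ x : Fin L, KinkRelation q x.castSucc x.succ u)
    (hsupp : ∀ σ, (downSet σ).card ≠ k → u σ = 0) {σ₀ : Fin (L + 1) → Fin 2}
    (hσ₀ : (downSet σ₀).card = k) (h₀ : u σ₀ = 0) : u = 0 := by
  ext τ
  by_cases hτ : (downSet τ).card = k
  · obtain ⟨π, rfl⟩ := exists_perm_eq_comp_of_card_fiber_eq
      (card_fiber_eq_of_card_downSet_eq (hτ.trans hσ₀.symm))
    exact Fin.comp_perm_of_comp_swap_castSucc_succ (P := fun σ => u σ = 0)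
      (fun σ x => (hu x).apply_comp_swap_eq_zero hq (Fin.castSucc_ne_succ x)) π h₀
  · exact hsupp τ hτ

theorem exists_eq_smul_psiSector {L : ℕ} {q : ℝ} (hq : q ≠ 0) {k : ℕ}
    {v : (Fin (L + 1) → Fin 2) → ℂ} (hv : ∀ x : Fin L, KinkRelation q x.castSucc x.succ v)
    (hsupp : ∀ σ, (downSet σ).card ≠ k → v σ = 0) : ∃ c : ℂ, v = c • psiSector L q k := by
  by_cases hk : ∃ σ₀ : Fin (L + 1) → Fin 2, (downSet σ₀).card = k
  · obtain ⟨σ₀, hσ₀⟩ := hk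
    have hψ₀ : psiSector L q k σ₀ ≠ 0 := by
      rw [psiSector_apply, if_pos hσ₀]
      exact pow_ne_zero _ (by exact_mod_cast hq)
    refine ⟨v σ₀ / psiSector L q k σ₀, sub_eq_zero.1 (eq_zero_of_kinkRelation hq ?_ ?_ hσ₀ ?_)⟩
    · intro x σ
      simp only [Pi.sub_apply, Pi.smul_apply, smul_eq_mul, hv x σ, psiSector_kinkRelation L q k x σ]
      ring
    · intro σ hσ
      simp [hsupp σ hσ, psiSector_apply, hσ]
    · simp [hψ₀]
  · exact ⟨0, funext fun σ => (hsupp σ fun h => hk ⟨σ, h⟩).trans (zero_smul ℂ _).symm⟩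

section SectorDecomposition

variable {ι : Type*} [Fintype ι]

def sectorPart (k : ℕ) (v : (ι → Fin 2) → ℂ) : (ι → Fin 2) → ℂ :=
  fun σ => if (downSet σ).card = k then v σ else 0

theorem KinkRelation.sectorPart [DecidableEq ι] {q : ℝ} {a b : ι} (hab : a ≠ b)
    {v : (ι → Fin 2) → ℂ} (hv : KinkRelation q a b v) (k : ℕ) :
    KinkRelation q a b (sectorPart k v) := by
  intro σ
  simp only [_root_.sectorPart, card_downSet_update_update_zero_one hab]
  split_ifs
  · exact hv σ
  · rw [mul_zero]

theorem sum_sectorPart (v : (ι → Fin 2) → ℂ) :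
    ∑ k ∈ Finset.range (Fintype.card ι + 1), sectorPart k v = v := by
  ext σ
  simp [sectorPart, Finset.sum_apply, Nat.lt_succ_of_le (Finset.card_le_univ _)]

end SectorDecomposition

theorem ker_HChain_eq_span {L : ℕ} {q : ℝ} (hq : q ≠ 0) :
    LinearMap.ker (HChain L q).mulVecLin
      = Submodule.span ℂ (Set.range fun j : Fin (L + 2) => psiSector L q j) := by
  refine le_antisymm (fun v hv => ?_) (Submodule.span_le.2 ?_)
  · rw [LinearMap.mem_ker, mulVecLin_apply, HChain_mulVec_eq_zero_iff hq] at hv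
    rw [← sum_sectorPart v]
    refine Submodule.sum_mem _ fun j hj => ?_
    obtain ⟨c, hc⟩ := exists_eq_smul_psiSector hq
      (fun x => (hv x).sectorPart (Fin.castSucc_ne_succ x) j) fun σ hσ => if_neg hσ
    rw [hc]
    exact Submodule.smul_mem _ _ (Submodule.subset_span ⟨⟨j, by simp at hj; omega⟩, rfl⟩)
  · rintro _ ⟨j, rfl⟩
    exact HChain_mulVec_psiSector hq j

theorem linearIndependent_psiSector {L : ℕ} {q : ℝ} (hq : q ≠ 0) :
    LinearIndependent ℂ fun j : Fin (L + 2) => psiSector L q j := by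
  refine Fintype.linearIndependent_iff.2 fun g hg j => ?_
  obtain ⟨σ, hσ⟩ := exists_card_downSet_eq (ι := Fin (L + 1)) (k := j) (by simp; omega)
  have := congrFun hg σ
  rw [Finset.sum_apply, Finset.sum_eq_single j (fun i _ hij => by
    simp [psiSector_apply, hσ, Fin.val_ne_of_ne hij.symm]) (by simp)] at this
  simpa [psiSector_apply, hσ, hq] using this

theorem HChain_kernel_sector_general (q : ℝ) (hq0 : 0 < q)
    (L : ℕ) (k : ℕ) :
    (∀ v : (Fin (L + 1) → Fin 2) → ℂ,
      ((HChain L q).mulVec v = 0 ∧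
          (S3tot L).mulVec v = ((((L : ℂ) + 1) / 2 - (k : ℂ))) • v) ↔
        ∃ c : ℂ, v = c • psiSector L q k) ∧
    Module.finrank ℂ (LinearMap.ker (HChain L q).mulVecLin) = L + 2 := by
  have hq := hq0.ne'
  refine ⟨fun v => ⟨fun ⟨hH, hS⟩ => ?_, ?_⟩, ?_⟩
  · exact exists_eq_smul_psiSector hq ((HChain_mulVec_eq_zero_iff hq v).1 hH)
      ((S3tot_mulVec_eq_smul_iff k v).1 hS)
  · rintro ⟨c, rfl⟩
    refine ⟨by rw [mulVec_smul, HChain_mulVec_psiSector hq, smul_zero], ?_⟩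
    exact (S3tot_mulVec_eq_smul_iff k _).2 fun σ hσ => by simp [psiSector_apply, hσ]
  · rw [ker_HChain_eq_span hq, finrank_span_eq_card (linearIndependent_psiSector hq),
      Fintype.card_fin]

/-- For every `q ∈ (0,1)`, every `L ≥ 1`, and every `k ∈ {0,…,L+1}`,
the intersection of the kernel of `H_L` with the magnetization sector
(the eigenspace of `S³_tot` with eigenvalue `(L+1)/2 − k`) is exactly
one-dimensional, spanned by `ψ_k`. Consequently the kernel of `H_L` has
dimension `L+2`. -/
theorem HChain_kernel_sector (q : ℝ) (hq0 : 0 < q) (hq1 : q < 1)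
    (L : ℕ) (hL : 1 ≤ L) (k : ℕ) (hk : k ≤ L + 1) :
    (∀ v : (Fin (L + 1) → Fin 2) → ℂ,
      ((HChain L q).mulVec v = 0 ∧
          (S3tot L).mulVec v = ((((L : ℂ) + 1) / 2 - (k : ℂ))) • v) ↔
        ∃ c : ℂ, v = c • psiSector L q k) ∧
    Module.finrank ℂ (LinearMap.ker (HChain L q).mulVecLin) = L + 2 :=
  HChain_kernel_sector_general q hq0 L k
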